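/- arXiv:2203.14572 — 2 statements merged into one kernel-verified Lean document; each statement's English description precedes it below -/
import Mathlib

section
/- Let S be a convex subset of ℝⁿ containing 0, let u : S → ℝ be concave with |u(x)| ≤ U for all x ∈ S, and let α ∈ [0,1]. Then max_{z∈S} u((1-α)z) ≥ max_{z∈S} u(z) - 2αU. -/
open Set

theorem shrinking_domain_lemma {n : ℕ} (S : Set (EuclideanSpace ℝ (Fin n)))
    (hconv : Convex ℝ S) (h0 : (0 : EuclideanSpace ℝ (Fin n)) ∈ S)
    (u : EuclideanSpace ℝ (Fin n) → ℝ) (hconc : ConcaveOn ℝ S u)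
    (U : ℝ) (hU : ∀ x ∈ S, |u x| ≤ U)
    (α : ℝ) (hα : α ∈ Icc (0:ℝ) 1) :
    (⨆ z : S, u ((1 - α) • (z : EuclideanSpace ℝ (Fin n)))) ≥
      (⨆ z : S, u (z : EuclideanSpace ℝ (Fin n))) - 2 * α * U := by
  obtain ⟨hα0, hα1⟩ := hα
  have hmem : ∀ z : S, (1 - α) • (z : EuclideanSpace ℝ (Fin n)) ∈ S := by
    intro z
    have := hconv h0 z.2 (a := α) (b := 1 - α) hα0 (by linarith) (by ring)
    simpa using this
  have hbdd : BddAbove (range fun z : S => u ((1 - α) • (z : EuclideanSpace ℝ (Fin n)))) := by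
    refine ⟨U, ?_⟩
    rintro x ⟨z, rfl⟩
    exact (abs_le.mp (hU _ (hmem z))).2
  have hne : Nonempty S := ⟨⟨0, h0⟩⟩
  have key : ∀ z : S, u (z : EuclideanSpace ℝ (Fin n)) - 2 * α * U ≤
      u ((1 - α) • (z : EuclideanSpace ℝ (Fin n))) := by
    intro z
    have hc := hconc.2 h0 z.2 hα0 (by linarith : (0:ℝ) ≤ 1 - α) (by ring)
    simp only [smul_zero, zero_add] at hc
    have h1 := abs_le.mp (hU _ h0)
    have h2 := abs_le.mp (hU _ z.2)
    simp only [smul_eq_mul] at hc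
    nlinarith [mul_le_mul_of_nonneg_left (by linarith [h1.1, h2.2] : (-(2*U) : ℝ) ≤ u 0 - u (z : EuclideanSpace ℝ (Fin n))) hα0]
  rw [ge_iff_le, sub_le_iff_le_add]
  exact ciSup_le fun z : S => by linarith [key z, le_ciSup hbdd z]
end

section
/- Let Γ be a game in which each player k ∈ K has a compact convex strategy set S_k ⊂ ℝ^M and utility u_k, and suppose the weighted sum σ(X, r) = Σ_k r_k u_k(X) with all r_k > 0 is diagonally strictly concave, i.e. (X¹ - X⁰)ᵀ(∇σ(X¹, r) - ∇σ(X⁰, r)) < 0 for all distinct X⁰, X¹. Then Γ has at most one Nash equilibrium. -/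
open Set

/-- A Nash equilibrium of the game with strategy sets `S` and utilities `u`. -/
def IsNashEq {ι E : Type*} [DecidableEq ι] (S : ι → Set E) (u : ι → (ι → E) → ℝ)
    (X : ι → E) : Prop :=
  (∀ k, X k ∈ S k) ∧
    ∀ k, ∀ x' ∈ S k, u k (Function.update X k x') ≤ u k X

/-!
At an equilibrium `X`, each `X k` maximizes `x ↦ u k (update X k x)` over the convex set `S k`,
so the first-order condition gives `⟪x - X k, g k X⟫ ≤ 0` for all `x ∈ S k`. Applying this
at two equilibria `X⁰, X¹` (each tested against the other) and adding, every term
`r k ⟪X¹ k - X⁰ k, g k X¹ - g k X⁰⟫` is nonnegative, contradicting diagonal strict concavity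
unless `X⁰ = X¹`.
-/

section FirstOrder

variable {E : Type*} [NormedAddCommGroup E] [InnerProductSpace ℝ E] [CompleteSpace E]

theorem IsMaxOn.inner_sub_gradient_nonpos {f : E → ℝ} {s : Set E} {a g x : E}
    (hs : Convex ℝ s) (hf : HasGradientAt f g a) (hmax : IsMaxOn f s a) (ha : a ∈ s)
    (hx : x ∈ s) : inner ℝ (x - a) g ≤ (0 : ℝ) := by
  have hdir : x - a ∈ posTangentConeAt s a :=
    sub_mem_posTangentConeAt_of_segment_subset (hs.segment_subset ha hx)
  simpa [InnerProductSpace.toDual_apply_apply, real_inner_comm] using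
    hmax.localize.hasFDerivWithinAt_nonpos hf.hasFDerivAt.hasFDerivWithinAt hdir

end FirstOrder

namespace IsNashEq

variable {ι E : Type*} [DecidableEq ι] {S : ι → Set E} {u : ι → (ι → E) → ℝ} {X : ι → E}

theorem isMaxOn (hX : IsNashEq S u X) (k : ι) :
    IsMaxOn (fun x => u k (Function.update X k x)) (S k) (X k) := fun x hx => by
  simpa [Function.update_eq_self] using hX.2 k x hx

variable [NormedAddCommGroup E] [InnerProductSpace ℝ E] [CompleteSpace E]
  {g : ι → (ι → E) → E}

theorem inner_sub_gradient_nonpos (hX : IsNashEq S u X) (hS : ∀ k, Convex ℝ (S k))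
    (hg : ∀ k, HasGradientAt (fun x => u k (Function.update X k x)) (g k X) (X k))
    {k : ι} {x : E} (hx : x ∈ S k) : inner ℝ (x - X k) (g k X) ≤ (0 : ℝ) :=
  (hX.isMaxOn k).inner_sub_gradient_nonpos (hS k) (hg k) (hX.1 k) hx

theorem inner_sub_gradient_sub_nonneg {Y : ι → E} (hX : IsNashEq S u X)
    (hY : IsNashEq S u Y) (hS : ∀ k, Convex ℝ (S k))
    (hg : ∀ k (Z : ι → E), HasGradientAt (fun x => u k (Function.update Z k x)) (g k Z) (Z k))
    (k : ι) : (0 : ℝ) ≤ inner ℝ (Y k - X k) (g k Y - g k X) := by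
  have hXY := hX.inner_sub_gradient_nonpos hS (fun k => hg k X) (hY.1 k)
  have hYX := hY.inner_sub_gradient_nonpos hS (fun k => hg k Y) (hX.1 k)
  rw [← neg_sub, inner_neg_left] at hYX
  rw [inner_sub_right]
  linarith

end IsNashEq

theorem rosen_uniqueness_general
    {ι : Type*} [Fintype ι] [DecidableEq ι] (M : ℕ)
    (S : ι → Set (EuclideanSpace ℝ (Fin M)))
    (hSconv : ∀ k, Convex ℝ (S k))
    (u : ι → (ι → EuclideanSpace ℝ (Fin M)) → ℝ)
    (r : ι → ℝ) (hr : ∀ k, 0 < r k)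
    (g : ι → (ι → EuclideanSpace ℝ (Fin M)) → EuclideanSpace ℝ (Fin M))
    (hgrad : ∀ k (X : ι → EuclideanSpace ℝ (Fin M)),
      HasGradientAt (fun x => u k (Function.update X k x)) (g k X) (X k))
    (hDSC : ∀ X0 X1 : ι → EuclideanSpace ℝ (Fin M),
      (∀ k, X0 k ∈ S k) → (∀ k, X1 k ∈ S k) → X0 ≠ X1 →
      ∑ k, r k * inner ℝ (X1 k - X0 k) (g k X1 - g k X0) < (0:ℝ)) :
    ∀ X0 X1 : ι → EuclideanSpace ℝ (Fin M),
      IsNashEq S u X0 → IsNashEq S u X1 → X0 = X1 := by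
  intro X0 X1 h0 h1
  by_contra hne
  have hsum : (0 : ℝ) ≤ ∑ k, r k * inner ℝ (X1 k - X0 k) (g k X1 - g k X0) :=
    Finset.sum_nonneg fun k _ =>
      mul_nonneg (hr k).le (h0.inner_sub_gradient_sub_nonneg h1 hSconv hgrad k)
  exact (hDSC X0 X1 h0.1 h1.1 hne).not_ge hsum

theorem rosen_uniqueness
    {ι : Type*} [Fintype ι] [DecidableEq ι] (M : ℕ)
    (S : ι → Set (EuclideanSpace ℝ (Fin M)))
    (hScomp : ∀ k, IsCompact (S k)) (hSconv : ∀ k, Convex ℝ (S k))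
    (u : ι → (ι → EuclideanSpace ℝ (Fin M)) → ℝ)
    (r : ι → ℝ) (hr : ∀ k, 0 < r k)
    (g : ι → (ι → EuclideanSpace ℝ (Fin M)) → EuclideanSpace ℝ (Fin M))
    (hgrad : ∀ k (X : ι → EuclideanSpace ℝ (Fin M)),
      HasGradientAt (fun x => u k (Function.update X k x)) (g k X) (X k))
    (hDSC : ∀ X0 X1 : ι → EuclideanSpace ℝ (Fin M),
      (∀ k, X0 k ∈ S k) → (∀ k, X1 k ∈ S k) → X0 ≠ X1 →
      ∑ k, r k * inner ℝ (X1 k - X0 k) (g k X1 - g k X0) < (0:ℝ)) :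
    ∀ X0 X1 : ι → EuclideanSpace ℝ (Fin M),
      IsNashEq S u X0 → IsNashEq S u X1 → X0 = X1 :=
  rosen_uniqueness_general M S hSconv u r hr g hgrad hDSC
end
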